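/- arXiv:2008.03102 — 8 statements merged into one kernel-verified Lean document; each statement's English description precedes it below -/
import Mathlib

section
/- In the decentralized equilibrium, the derivative of agent j's equilibrium utility with respect to the coalition average type is ∂U_j/∂ξ̄ = ξ_j·N·x₁²·(1 − V''(N·x₁·ξ̄)·ξ_j)/(1 − V''(N·x₁·ξ̄)·N·ξ̄), which is strictly positive; hence every agent's equilibrium utility strictly increases in the average type of their coalition. -/
/-!
By the chain rule, `U_j'(ξ̄) = ξ_j V'(N x₁ ξ̄) N (x₁' ξ̄ + x₁) − ξ_j² x₁ x₁'`. The first-order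
condition `V'(N x₁ ξ̄) = x₁` and the implicit derivative `x₁' = V'' N x₁ / (1 − V'' N ξ̄)` give
`x₁' ξ̄ + x₁ = x₁ / (1 − V'' N ξ̄)`, and the closed form follows. Since `V'' < 0`, both
`1 − V'' ξ_j` and `1 − V'' N ξ̄` exceed `1`, so the derivative is positive.
-/

lemma hasDerivAt_mul_comp_sub_sq {V x : ℝ → ℝ} {a c d ξ : ℝ} (hx : HasDerivAt x d ξ)
    (hV : DifferentiableAt ℝ V (c * x ξ * ξ)) :
    HasDerivAt (fun ζ => a * V (c * x ζ * ζ) - a ^ 2 / 2 * x ζ ^ 2)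
      (a * (deriv V (c * x ξ * ξ) * (c * (d * ξ + x ξ))) - a ^ 2 * x ξ * d) ξ := by
  have hinner : HasDerivAt (fun ζ => c * x ζ * ζ) (c * (d * ξ + x ξ)) ξ :=
    ((hx.const_mul c).mul (hasDerivAt_id' ξ)).congr_deriv (by ring)
  exact (((hV.hasDerivAt.comp (h := fun ζ => c * x ζ * ζ) ξ hinner).const_mul a).sub
    ((hx.pow 2).const_mul (a ^ 2 / 2))).congr_deriv (by push_cast; ring)

lemma mul_mul_add_sub_eq_of_eq_div {a c A X d ξ : ℝ} (hD : 1 - A * c * ξ ≠ 0)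
    (hd : d = A * c * X / (1 - A * c * ξ)) :
    a * (X * (c * (d * ξ + X))) - a ^ 2 * X * d =
      a * c * X ^ 2 * ((1 - A * a) / (1 - A * c * ξ)) := by
  have hD' : 1 - c * A * ξ ≠ 0 := by rwa [mul_comm c A]
  subst hd
  field_simp
  ring

lemma one_sub_mul_pos_of_neg {A b : ℝ} (hA : A < 0) (hb : 0 < b) : 0 < 1 - A * b := by
  nlinarith [mul_neg_of_neg_of_pos hA hb]

theorem decentralized_utility_increasing_in_mean_general
    (N : ℕ) (hN : 1 ≤ N) (V : ℝ → ℝ) (x₁ : ℝ → ℝ) (ξj : ℝ) (hξj : 0 < ξj)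
    (hV : Differentiable ℝ V)
    (hVneg : ∀ t, deriv (deriv V) t < 0)
    (hx₁diff : ∀ ξ > (0:ℝ), DifferentiableAt ℝ x₁ ξ)
    (hx₁pos : ∀ ξ > (0:ℝ), 0 < x₁ ξ)
    (himpl : ∀ ξ > (0:ℝ), deriv V ((N : ℝ) * x₁ ξ * ξ) = x₁ ξ)
    (hderiv : ∀ ξ > (0:ℝ), deriv x₁ ξ =
      deriv (deriv V) ((N : ℝ) * x₁ ξ * ξ) * N * x₁ ξ /
        (1 - deriv (deriv V) ((N : ℝ) * x₁ ξ * ξ) * N * ξ))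
    (ξbar : ℝ) (hξ : 0 < ξbar) :
    deriv (fun ξ => ξj * V ((N : ℝ) * x₁ ξ * ξ) - ξj ^ 2 / 2 * (x₁ ξ) ^ 2) ξbar =
      ξj * N * (x₁ ξbar) ^ 2 *
        ((1 - deriv (deriv V) ((N : ℝ) * x₁ ξbar * ξbar) * ξj) /
          (1 - deriv (deriv V) ((N : ℝ) * x₁ ξbar * ξbar) * N * ξbar)) ∧
    0 < deriv (fun ξ => ξj * V ((N : ℝ) * x₁ ξ * ξ) - ξj ^ 2 / 2 * (x₁ ξ) ^ 2) ξbar := by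
  set A := deriv (deriv V) ((N : ℝ) * x₁ ξbar * ξbar)
  have hNpos : (0 : ℝ) < N := by exact_mod_cast hN
  have hA : A < 0 := hVneg _
  have hD : 0 < 1 - A * N * ξbar := by
    simpa only [mul_assoc] using one_sub_mul_pos_of_neg hA (mul_pos hNpos hξ)
  have hformula :
      deriv (fun ξ => ξj * V ((N : ℝ) * x₁ ξ * ξ) - ξj ^ 2 / 2 * (x₁ ξ) ^ 2) ξbar =
        ξj * N * (x₁ ξbar) ^ 2 * ((1 - A * ξj) / (1 - A * N * ξbar)) := by
    rw [(hasDerivAt_mul_comp_sub_sq (hx₁diff ξbar hξ).hasDerivAt (hV _)).deriv, himpl ξbar hξ]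
    exact mul_mul_add_sub_eq_of_eq_div hD.ne' (hderiv ξbar hξ)
  refine ⟨hformula, hformula ▸ ?_⟩
  have hX : 0 < x₁ ξbar := hx₁pos ξbar hξ
  have hnum : 0 < 1 - A * ξj := one_sub_mul_pos_of_neg hA hξj
  positivity

/-- Decentralized equilibrium: the derivative of agent `j`'s equilibrium
utility with respect to the coalition average type equals
`ξ_j·N·x₁²·(1 − V''(N·x₁·ξ̄)·ξ_j)/(1 − V''(N·x₁·ξ̄)·N·ξ̄)` and is strictly
positive. -/
theorem decentralized_utility_increasing_in_mean
    (N : ℕ) (hN : 1 ≤ N) (V : ℝ → ℝ) (x₁ : ℝ → ℝ) (ξj : ℝ) (hξj : 0 < ξj)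
    (hV : Differentiable ℝ V) (hV' : Differentiable ℝ (deriv V))
    (hVpos : ∀ t, 0 < deriv V t) (hVneg : ∀ t, deriv (deriv V) t < 0)
    (hx₁diff : ∀ ξ > (0:ℝ), DifferentiableAt ℝ x₁ ξ)
    (hx₁pos : ∀ ξ > (0:ℝ), 0 < x₁ ξ)
    (himpl : ∀ ξ > (0:ℝ), deriv V ((N : ℝ) * x₁ ξ * ξ) = x₁ ξ)
    (hderiv : ∀ ξ > (0:ℝ), deriv x₁ ξ =
      deriv (deriv V) ((N : ℝ) * x₁ ξ * ξ) * N * x₁ ξ /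
        (1 - deriv (deriv V) ((N : ℝ) * x₁ ξ * ξ) * N * ξ))
    (ξbar : ℝ) (hξ : 0 < ξbar) :
    deriv (fun ξ => ξj * V ((N : ℝ) * x₁ ξ * ξ) - ξj ^ 2 / 2 * (x₁ ξ) ^ 2) ξbar =
      ξj * N * (x₁ ξbar) ^ 2 *
        ((1 - deriv (deriv V) ((N : ℝ) * x₁ ξbar * ξbar) * ξj) /
          (1 - deriv (deriv V) ((N : ℝ) * x₁ ξbar * ξbar) * N * ξbar)) ∧
    0 < deriv (fun ξ => ξj * V ((N : ℝ) * x₁ ξ * ξ) - ξj ^ 2 / 2 * (x₁ ξ) ^ 2) ξbar :=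
  decentralized_utility_increasing_in_mean_general N hN V x₁ ξj hξj hV hVneg hx₁diff hx₁pos himpl
    hderiv ξbar hξ
end

section
/- In the decentralized equilibrium, the single-crossing property holds: ∂²U_j/(∂ξ̄ ∂ξ_j) > 0, i.e., the marginal benefit of a higher coalition average type is strictly increasing in one's own type. -/
/-! With `c < 0` both `1 - c·N·ξ̄` and the derivative `1 - 2cξ_j` of `ξ_j(1 - cξ_j)` are positive,
so `∂/∂ξ_j` of the marginal benefit, `N·x₁²·(1 - 2cξ_j)/(1 - c·N·ξ̄)`, is a product of positive
factors; `N > 0` comes from `0 < ξ_j < N·ξ̄`. -/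

theorem hasDerivAt_mul_one_sub_mul (c x : ℝ) :
    HasDerivAt (fun t => t * (1 - c * t)) (1 - 2 * c * x) x := by
  refine ((hasDerivAt_id' x).mul (((hasDerivAt_id' x).const_mul c).const_sub 1)).congr_deriv ?_
  ring

theorem deriv_mul_const_mul_one_sub_mul_div (k c d x : ℝ) :
    deriv (fun t => t * k * ((1 - c * t) / d)) x = k * (1 - 2 * c * x) / d := by
  have hfun : (fun t => t * k * ((1 - c * t) / d)) = fun t => t * (1 - c * t) * (k / d) := by
    funext t
    ring
  rw [hfun, ((hasDerivAt_mul_one_sub_mul c x).mul_const (k / d)).deriv]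
  ring

/-- Decentralized equilibrium single crossing: the marginal benefit of a higher
coalition average type, `∂U_j/∂ξ̄ = ξ_j·N·x₁²·(1 − V''·ξ_j)/(1 − V''·N·ξ̄)`
(with `c = V''(N·x₁·ξ̄) < 0` fixed, as `ξ_j`'s effect on `ξ̄` is negligible),
is strictly increasing in the agent's own type `ξ_j`. -/
theorem decentralized_single_crossing
    (N : ℕ) (c x₁ ξbar ξj : ℝ)
    (hc : c < 0) (hx₁ : 0 < x₁) (hξj : 0 < ξj) (hlt : ξj < (N : ℝ) * ξbar) :
    0 < deriv (fun t => t * N * x₁ ^ 2 * ((1 - c * t) / (1 - c * N * ξbar))) ξj := by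
  have hNξbar : 0 < (N : ℝ) * ξbar := hξj.trans hlt
  have hN : 0 < (N : ℝ) := Nat.cast_pos.mpr <| Nat.pos_of_ne_zero fun h => by simp [h] at hNξbar
  have hden : 0 < 1 - c * N * ξbar := by nlinarith
  have hslope : 0 < 1 - 2 * c * ξj := by nlinarith
  have hfun : (fun t : ℝ => t * N * x₁ ^ 2 * ((1 - c * t) / (1 - c * N * ξbar)))
      = fun t => t * (N * x₁ ^ 2) * ((1 - c * t) / (1 - c * N * ξbar)) := by
    funext t
    ring
  rw [hfun, deriv_mul_const_mul_one_sub_mul_div]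
  positivity
end

section
/- Under centralized effort choice, the common contribution x₁(ξ̄) defined implicitly by N·ξ̄·V'(N·x₁) = x₁ is strictly increasing in the average type: dx₁/dξ̄ = N·V'(N·x₁)/(1 − V''(N·x₁)·N²·ξ̄) > 0. -/
/-!
Differentiating the fixed-point identity `x₁ ξ = N ξ V'(N x₁ ξ)` gives
`x₁' (1 - V''(N x₁) N² ξ) = N V'(N x₁)`. Concavity of `V` makes the bracket larger than `1`,
so the formula follows by division and `x₁'` has the sign of `V' > 0`.
-/

open Filter Topology

theorem deriv_mul_one_sub_of_eventually_eq_mul_comp {f x : ℝ → ℝ} {c ξ₀ : ℝ}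
    (hx : DifferentiableAt ℝ x ξ₀) (hf : DifferentiableAt ℝ f (c * x ξ₀))
    (h : ∀ᶠ ξ in 𝓝 ξ₀, c * ξ * f (c * x ξ) = x ξ) :
    deriv x ξ₀ * (1 - deriv f (c * x ξ₀) * c ^ 2 * ξ₀) = c * f (c * x ξ₀) := by
  have hrhs : HasDerivAt (fun ξ => c * ξ * f (c * x ξ))
      (c * 1 * f (c * x ξ₀) + c * ξ₀ * (deriv f (c * x ξ₀) * (c * deriv x ξ₀))) ξ₀ :=
    ((hasDerivAt_id ξ₀).const_mul c).mul (hf.hasDerivAt.comp ξ₀ (hx.hasDerivAt.const_mul c))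
  have hderiv := hx.hasDerivAt.unique (hrhs.congr_of_eventuallyEq (h.mono fun _ => Eq.symm))
  linear_combination hderiv

theorem centralized_contribution_increasing_general
    (N : ℕ) (hN : 1 ≤ N) (V : ℝ → ℝ) (x₁ : ℝ → ℝ)
    (hV' : Differentiable ℝ (deriv V))
    (hVpos : ∀ t, 0 < deriv V t) (hVneg : ∀ t, deriv (deriv V) t < 0)
    (hx₁diff : ∀ ξ > (0:ℝ), DifferentiableAt ℝ x₁ ξ)
    (himpl : ∀ ξ > (0:ℝ), (N : ℝ) * ξ * deriv V ((N : ℝ) * x₁ ξ) = x₁ ξ)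
    (ξbar : ℝ) (hξ : 0 < ξbar) :
    deriv x₁ ξbar =
      (N : ℝ) * deriv V ((N : ℝ) * x₁ ξbar) /
        (1 - deriv (deriv V) ((N : ℝ) * x₁ ξbar) * (N : ℝ) ^ 2 * ξbar) ∧
    0 < deriv x₁ ξbar := by
  have hden : 0 < 1 - deriv (deriv V) ((N : ℝ) * x₁ ξbar) * (N : ℝ) ^ 2 * ξbar := by
    have hconcave := mul_nonpos_of_nonpos_of_nonneg
      (mul_nonpos_of_nonpos_of_nonneg (hVneg ((N : ℝ) * x₁ ξbar)).le (sq_nonneg (N : ℝ))) hξ.le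
    linarith
  have hkey := deriv_mul_one_sub_of_eventually_eq_mul_comp (hx₁diff ξbar hξ) (hV' _)
    ((eventually_gt_nhds hξ).mono himpl)
  have hformula := eq_div_of_mul_eq hden.ne' hkey
  have hNpos : (0 : ℝ) < N := by exact_mod_cast hN
  exact ⟨hformula, hformula ▸ div_pos (mul_pos hNpos (hVpos _)) hden⟩

/-- Centralized equilibrium: the common contribution `x₁(ξ̄)` implicitly
defined by `N·ξ̄·V'(N·x₁) = x₁` is strictly increasing in the average type:
`dx₁/dξ̄ = N·V'(N·x₁)/(1 − V''(N·x₁)·N²·ξ̄) > 0`. -/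
theorem centralized_contribution_increasing
    (N : ℕ) (hN : 1 ≤ N) (V : ℝ → ℝ) (x₁ : ℝ → ℝ)
    (hV : Differentiable ℝ V) (hV' : Differentiable ℝ (deriv V))
    (hVpos : ∀ t, 0 < deriv V t) (hVneg : ∀ t, deriv (deriv V) t < 0)
    (hx₁diff : ∀ ξ > (0:ℝ), DifferentiableAt ℝ x₁ ξ)
    (hx₁pos : ∀ ξ > (0:ℝ), 0 < x₁ ξ)
    (himpl : ∀ ξ > (0:ℝ), (N : ℝ) * ξ * deriv V ((N : ℝ) * x₁ ξ) = x₁ ξ)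
    (ξbar : ℝ) (hξ : 0 < ξbar) :
    deriv x₁ ξbar =
      (N : ℝ) * deriv V ((N : ℝ) * x₁ ξbar) /
        (1 - deriv (deriv V) ((N : ℝ) * x₁ ξbar) * (N : ℝ) ^ 2 * ξbar) ∧
    0 < deriv x₁ ξbar :=
  centralized_contribution_increasing_general N hN V x₁ hV' hVpos hVneg hx₁diff himpl ξbar hξ
end

section
/- Under centralized effort choice, ∂U_j/∂ξ̄ = ((ξ_j − ξ̄)/ξ̄)·x₁·(dx₁/dξ̄), which is strictly positive for agents with above-average type (ξ_j > ξ̄), zero for ξ_j = ξ̄, and strictly negative for below-average types (ξ_j < ξ̄). -/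
/-! The first-order condition `N ξ̄ V'(N x₁) = x₁` turns the marginal benefit
`ξ_j V'(N x₁) N x₁'` of a larger common effort into `(ξ_j / ξ̄) x₁ x₁'`, while its
marginal cost is `x₁ x₁'`; so the effect of `ξ̄` on `U_j` has the sign of
`ξ_j − ξ̄`, since `x₁` and `x₁'` are positive. -/

theorem hasDerivAt_utility_of_common_effort {V x : ℝ → ℝ} {n c ξ : ℝ}
    (hV : DifferentiableAt ℝ V (n * x ξ)) (hx : DifferentiableAt ℝ x ξ) :
    HasDerivAt (fun ξ => c * V (n * x ξ) - x ξ ^ 2 / 2)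
      (c * (deriv V (n * x ξ) * (n * deriv x ξ)) - x ξ * deriv x ξ) ξ := by
  have hVx : HasDerivAt (fun ξ => V (n * x ξ)) (deriv V (n * x ξ) * (n * deriv x ξ)) ξ :=
    hV.hasDerivAt.comp ξ (hx.hasDerivAt.const_mul n)
  exact ((hVx.const_mul c).fun_sub ((hx.hasDerivAt.fun_pow 2).div_const 2)).congr_deriv (by ring)

theorem marginal_utility_eq_of_first_order_condition {n c ξ v x x' : ℝ} (hξ : ξ ≠ 0)
    (hfoc : n * ξ * v = x) :
    c * (v * (n * x')) - x * x' = ((c - ξ) / ξ) * x * x' := by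
  rw [← hfoc]
  field_simp

theorem centralized_utility_derivative_sign_general
    (N : ℕ) (V : ℝ → ℝ) (x₁ : ℝ → ℝ) (ξj : ℝ)
    (hV : Differentiable ℝ V)
    (hx₁diff : ∀ ξ > (0:ℝ), DifferentiableAt ℝ x₁ ξ)
    (hx₁pos : ∀ ξ > (0:ℝ), 0 < x₁ ξ)
    (himpl : ∀ ξ > (0:ℝ), (N : ℝ) * ξ * deriv V ((N : ℝ) * x₁ ξ) = x₁ ξ)
    (hderivpos : ∀ ξ > (0:ℝ), 0 < deriv x₁ ξ)
    (ξbar : ℝ) (hξ : 0 < ξbar) :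
    deriv (fun ξ => ξj * V ((N : ℝ) * x₁ ξ) - (x₁ ξ) ^ 2 / 2) ξbar =
      ((ξj - ξbar) / ξbar) * x₁ ξbar * deriv x₁ ξbar ∧
    (ξbar < ξj → 0 < deriv (fun ξ => ξj * V ((N : ℝ) * x₁ ξ) - (x₁ ξ) ^ 2 / 2) ξbar) ∧
    (ξj = ξbar → deriv (fun ξ => ξj * V ((N : ℝ) * x₁ ξ) - (x₁ ξ) ^ 2 / 2) ξbar = 0) ∧
    (ξj < ξbar → deriv (fun ξ => ξj * V ((N : ℝ) * x₁ ξ) - (x₁ ξ) ^ 2 / 2) ξbar < 0) := by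
  have hU : deriv (fun ξ => ξj * V ((N : ℝ) * x₁ ξ) - (x₁ ξ) ^ 2 / 2) ξbar =
      ((ξj - ξbar) / ξbar) * x₁ ξbar * deriv x₁ ξbar := by
    rw [(hasDerivAt_utility_of_common_effort (hV _) (hx₁diff ξbar hξ)).deriv]
    exact marginal_utility_eq_of_first_order_condition hξ.ne' (himpl ξbar hξ)
  have hx := hx₁pos ξbar hξ
  have hx' := hderivpos ξbar hξ
  refine ⟨hU, fun h => ?_, fun h => ?_, fun h => ?_⟩ <;> rw [hU]
  · exact mul_pos (mul_pos (div_pos (sub_pos.2 h) hξ) hx) hx'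
  · rw [h, sub_self, zero_div, zero_mul, zero_mul]
  · exact mul_neg_of_neg_of_pos
      (mul_neg_of_neg_of_pos (div_neg_of_neg_of_pos (sub_neg.2 h) hξ) hx) hx'

/-- Centralized choice: `∂U_j/∂ξ̄ = ((ξ_j − ξ̄)/ξ̄)·x₁·(dx₁/dξ̄)`, strictly
positive for above-average types, zero at the average, and strictly negative
for below-average types. -/
theorem centralized_utility_derivative_sign
    (N : ℕ) (hN : 1 ≤ N) (V : ℝ → ℝ) (x₁ : ℝ → ℝ) (ξj : ℝ) (hξj : 0 < ξj)
    (hV : Differentiable ℝ V) (hV' : Differentiable ℝ (deriv V))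
    (hVpos : ∀ t, 0 < deriv V t) (hVneg : ∀ t, deriv (deriv V) t < 0)
    (hx₁diff : ∀ ξ > (0:ℝ), DifferentiableAt ℝ x₁ ξ)
    (hx₁pos : ∀ ξ > (0:ℝ), 0 < x₁ ξ)
    (himpl : ∀ ξ > (0:ℝ), (N : ℝ) * ξ * deriv V ((N : ℝ) * x₁ ξ) = x₁ ξ)
    (hderiv : ∀ ξ > (0:ℝ), deriv x₁ ξ =
      (N : ℝ) * deriv V ((N : ℝ) * x₁ ξ) /
        (1 - deriv (deriv V) ((N : ℝ) * x₁ ξ) * (N : ℝ) ^ 2 * ξ))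
    (hderivpos : ∀ ξ > (0:ℝ), 0 < deriv x₁ ξ)
    (ξbar : ℝ) (hξ : 0 < ξbar) :
    deriv (fun ξ => ξj * V ((N : ℝ) * x₁ ξ) - (x₁ ξ) ^ 2 / 2) ξbar =
      ((ξj - ξbar) / ξbar) * x₁ ξbar * deriv x₁ ξbar ∧
    (ξbar < ξj → 0 < deriv (fun ξ => ξj * V ((N : ℝ) * x₁ ξ) - (x₁ ξ) ^ 2 / 2) ξbar) ∧
    (ξj = ξbar → deriv (fun ξ => ξj * V ((N : ℝ) * x₁ ξ) - (x₁ ξ) ^ 2 / 2) ξbar = 0) ∧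
    (ξj < ξbar → deriv (fun ξ => ξj * V ((N : ℝ) * x₁ ξ) - (x₁ ξ) ^ 2 / 2) ξbar < 0) :=
  centralized_utility_derivative_sign_general N V x₁ ξj hV hx₁diff hx₁pos himpl hderivpos ξbar hξ
end

section
/- If a > 1 and average coalition payoff strictly increases in coalition size N while total welfare is strictly Schur-concave in the vector of coalition averages (by concavity of ξ ↦ 𝒰(ξ)), then total welfare over any partition of the population into coalitions is maximized by a single coalition containing all agents. -/
/-!
Write a coalition's welfare through its total endowment `W = N m`: it is
`c W^p N^r - W / (1 - a)` with `c = 1/(1-a) - 1/2 < 0`, `p = 2/(1+a) ∈ (0, 1]` and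
`r = (1-a)/(1+a) < 0`. The linear part is additive over coalitions. Since `W ↦ W^p` is
subadditive and `N ↦ N^r` is decreasing, `(∑ W_l)^p (∑ N_l)^r ≤ ∑ W_l^p N_l^r`,
so merging all coalitions into one can only raise welfare because `c < 0`.
-/

open Finset

theorem Real.rpow_sum_le_sum_rpow {ι : Type*} (s : Finset ι) {f : ι → ℝ} {p : ℝ}
    (hf : ∀ i ∈ s, 0 ≤ f i) (hp : 0 < p) (hp1 : p ≤ 1) :
    (∑ i ∈ s, f i) ^ p ≤ ∑ i ∈ s, f i ^ p :=
  le_sum_of_subadditive_on_pred (· ^ p) (0 ≤ ·) (Real.zero_rpow hp.ne').le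
    (fun _ _ hx hy => Real.rpow_add_le_add_rpow hx hy hp.le hp1) (fun _ _ => add_nonneg) f hf

theorem rpow_sum_mul_rpow_sum_le {ι : Type*} (s : Finset ι) {x w : ι → ℝ} {p r : ℝ}
    (hx : ∀ i ∈ s, 0 ≤ x i) (hw : ∀ i ∈ s, 0 < w i) (hp : 0 < p) (hp1 : p ≤ 1) (hr : r ≤ 0) :
    (∑ i ∈ s, x i) ^ p * (∑ i ∈ s, w i) ^ r ≤ ∑ i ∈ s, x i ^ p * w i ^ r :=
  calc (∑ i ∈ s, x i) ^ p * (∑ i ∈ s, w i) ^ r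
      ≤ (∑ i ∈ s, x i ^ p) * (∑ i ∈ s, w i) ^ r :=
        mul_le_mul_of_nonneg_right (Real.rpow_sum_le_sum_rpow s hx hp hp1)
          (Real.rpow_nonneg (sum_nonneg fun i hi => (hw i hi).le) r)
    _ = ∑ i ∈ s, x i ^ p * (∑ j ∈ s, w j) ^ r := sum_mul ..
    _ ≤ ∑ i ∈ s, x i ^ p * w i ^ r :=
        sum_le_sum fun i hi => mul_le_mul_of_nonneg_left
          (Real.rpow_le_rpow_of_nonpos (hw i hi) (single_le_sum (fun j hj => (hw j hj).le) hi) hr)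
          (Real.rpow_nonneg (hx i hi) p)

/-- The welfare `𝒰` of a coalition of `N` agents with mean type `m`. -/
noncomputable def coalitionWelfare (a m N : ℝ) : ℝ :=
  (1 / (1 - a) - 1 / 2) * m ^ (2 / (1 + a)) * N ^ ((3 - a) / (1 + a)) - N * m / (1 - a)

theorem coalitionWelfare_eq_endowment_form (a : ℝ) {m N : ℝ} (hm : 0 ≤ m) (hN : 0 < N) :
    coalitionWelfare a m N =
      (1 / (1 - a) - 1 / 2) * (N * m) ^ (2 / (1 + a)) * N ^ ((1 - a) / (1 + a))
        - N * m / (1 - a) := by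
  have hexp : (3 - a) / (1 + a) = 2 / (1 + a) + (1 - a) / (1 + a) := by ring
  rw [coalitionWelfare, hexp, Real.rpow_add hN, Real.mul_rpow hN.le hm]
  ring

theorem sum_coalitionWelfare_le {ι : Type*} (s : Finset ι) (hs : s.Nonempty) {a : ℝ}
    (ha : 1 < a) {m N : ι → ℝ} (hm : ∀ i ∈ s, 0 ≤ m i) (hN : ∀ i ∈ s, 0 < N i) :
    ∑ i ∈ s, coalitionWelfare a (m i) (N i) ≤
      coalitionWelfare a ((∑ i ∈ s, N i * m i) / ∑ i ∈ s, N i) (∑ i ∈ s, N i) := by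
  have hc : 1 / (1 - a) - 1 / 2 < 0 := by
    have : 1 / (1 - a) < 0 := one_div_neg.2 (by linarith)
    linarith
  have hp : 0 < 2 / (1 + a) := by positivity
  have hp1 : 2 / (1 + a) ≤ 1 := (div_le_one (by positivity)).2 (by linarith)
  have hr : (1 - a) / (1 + a) ≤ 0 := div_nonpos_of_nonpos_of_nonneg (by linarith) (by positivity)
  have hNm : ∀ i ∈ s, 0 ≤ N i * m i := fun i hi => mul_nonneg (hN i hi).le (hm i hi)
  have hNtot : 0 < ∑ i ∈ s, N i := sum_pos hN hs
  have key := rpow_sum_mul_rpow_sum_le s hNm hN hp hp1 hr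
  rw [coalitionWelfare_eq_endowment_form a (div_nonneg (sum_nonneg hNm) hNtot.le) hNtot,
    mul_div_cancel₀ _ hNtot.ne',
    sum_congr rfl fun i hi => coalitionWelfare_eq_endowment_form a (hm i hi) (hN i hi),
    sum_sub_distrib, ← sum_div]
  simp_rw [mul_assoc (1 / (1 - a) - 1 / 2), ← mul_sum]
  exact sub_le_sub_right (mul_le_mul_of_nonpos_left key hc.le) _

/-- For CRRA with `a > 1`, total welfare over any partition into coalitions
(of sizes `Nl` with means `ml`) is maximized by a single coalition containing
all agents (with the population mean). -/
theorem single_coalition_optimal_when_a_gt_one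
    (a : ℝ) (ha : 1 < a) (L : ℕ) (hL : 1 ≤ L)
    (Nl : Fin L → ℕ) (ml : Fin L → ℝ)
    (hNl : ∀ l, 1 ≤ Nl l) (hml : ∀ l, 0 < ml l) :
    ∑ l, ((1 / (1 - a) - 1 / 2) * (ml l) ^ (2 / (1 + a)) *
          ((Nl l : ℝ)) ^ ((3 - a) / (1 + a)) - (Nl l : ℝ) * ml l / (1 - a)) ≤
    (1 / (1 - a) - 1 / 2) *
        ((∑ l, (Nl l : ℝ) * ml l) / (∑ l, (Nl l : ℝ))) ^ (2 / (1 + a)) *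
        (∑ l, (Nl l : ℝ)) ^ ((3 - a) / (1 + a))
      - (∑ l, (Nl l : ℝ)) *
          ((∑ l, (Nl l : ℝ) * ml l) / (∑ l, (Nl l : ℝ))) / (1 - a) :=
  sum_coalitionWelfare_le univ (univ_nonempty_iff.2 ⟨⟨0, hL⟩⟩) ha (fun l _ => (hml l).le)
    fun l _ => Nat.cast_pos.2 (hNl l)
end

section
/- In the two-coalition contest game with payoffs U_j = (ξ_j/N)·X^b/(X^b + Y^b) − x_j²/2 where X = Σx_i, Y = Σy_i, the interior equilibrium conditions imply √(ξ̄_k)·M·y₁ = √(ξ̄_l)·N·x₁, where x_j = ξ_j·x₁ in coalition l (size N, mean ξ̄_l) and y_j = ξ_j·y₁ in coalition k (size M, mean ξ̄_k). -/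
/-!
Multiplying coalition `l`'s first-order condition by its aggregate `X` and coalition `k`'s by `Y`
turns both marginal terms into `b X^b Y^b / (X^b + Y^b)^2`, so `X · N x₁ = Y · M y₁`.
Since `X = ξ̄_l · N x₁` and `Y = ξ̄_k · M y₁`, this reads `ξ̄_l (N x₁)² = ξ̄_k (M y₁)²`;
take square roots.
-/

theorem Real.sqrt_mul_eq_sqrt_mul_of_mul_sq_eq {a c u v : ℝ} (ha : 0 ≤ a) (hc : 0 ≤ c)
    (hu : 0 ≤ u) (hv : 0 ≤ v) (h : a * u ^ 2 = c * v ^ 2) :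
    Real.sqrt a * u = Real.sqrt c * v := by
  rw [← Real.sqrt_sq hu, ← Real.sqrt_sq hv, ← Real.sqrt_mul ha, ← Real.sqrt_mul hc, h]

theorem mul_contest_marginal_comm {X Y : ℝ} (hX : X ≠ 0) (hY : Y ≠ 0) (b : ℝ) :
    X * (b * Y ^ b * X ^ (b - 1)) = Y * (b * Y ^ (b - 1) * X ^ b) := by
  rw [Real.rpow_sub_one hX, Real.rpow_sub_one hY]
  field_simp

theorem contest_equilibrium_relation_general
    (b ξl ξk x₁ y₁ : ℝ) (N M : ℕ)
    (hN : 1 ≤ N) (hM : 1 ≤ M)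
    (hξl : 0 < ξl) (hξk : 0 < ξk) (hx₁ : 0 < x₁) (hy₁ : 0 < y₁)
    (hFOCx : (1 / (N : ℝ)) *
        (b * (y₁ * M * ξk) ^ b * (x₁ * N * ξl) ^ (b - 1)) /
        (((x₁ * N * ξl) ^ b + (y₁ * M * ξk) ^ b) ^ 2) = x₁)
    (hFOCy : (1 / (M : ℝ)) *
        (b * (y₁ * M * ξk) ^ (b - 1) * (x₁ * N * ξl) ^ b) /
        (((x₁ * N * ξl) ^ b + (y₁ * M * ξk) ^ b) ^ 2) = y₁) :
    Real.sqrt ξk * M * y₁ = Real.sqrt ξl * N * x₁ := by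
  have hNpos : (0 : ℝ) < N := by exact_mod_cast hN
  have hMpos : (0 : ℝ) < M := by exact_mod_cast hM
  set X : ℝ := x₁ * N * ξl
  set Y : ℝ := y₁ * M * ξk
  set S : ℝ := (X ^ b + Y ^ b) ^ 2
  have hx : N * x₁ = b * Y ^ b * X ^ (b - 1) / S := by
    rw [← hFOCx]; field_simp
  have hy : M * y₁ = b * Y ^ (b - 1) * X ^ b / S := by
    rw [← hFOCy]; field_simp
  have hbalance : X * (N * x₁) = Y * (M * y₁) := by
    rw [hx, hy, mul_div_assoc', mul_div_assoc',
      mul_contest_marginal_comm (by positivity) (by positivity)]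
  have hsq : ξk * (M * y₁) ^ 2 = ξl * (N * x₁) ^ 2 := by
    linear_combination -hbalance
  linear_combination
    Real.sqrt_mul_eq_sqrt_mul_of_mul_sq_eq hξk.le hξl.le (by positivity) (by positivity) hsq

/-- Two-coalition contest: the interior equilibrium FOCs (in aggregate form)
imply `√ξ̄_k·M·y₁ = √ξ̄_l·N·x₁`. -/
theorem contest_equilibrium_relation
    (b ξl ξk x₁ y₁ : ℝ) (N M : ℕ)
    (hb0 : 0 < b) (hb1 : b < 1) (hN : 1 ≤ N) (hM : 1 ≤ M)
    (hξl : 0 < ξl) (hξk : 0 < ξk) (hx₁ : 0 < x₁) (hy₁ : 0 < y₁)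
    (hFOCx : (1 / (N : ℝ)) *
        (b * (y₁ * M * ξk) ^ b * (x₁ * N * ξl) ^ (b - 1)) /
        (((x₁ * N * ξl) ^ b + (y₁ * M * ξk) ^ b) ^ 2) = x₁)
    (hFOCy : (1 / (M : ℝ)) *
        (b * (y₁ * M * ξk) ^ (b - 1) * (x₁ * N * ξl) ^ b) /
        (((x₁ * N * ξl) ^ b + (y₁ * M * ξk) ^ b) ^ 2) = y₁) :
    Real.sqrt ξk * M * y₁ = Real.sqrt ξl * N * x₁ :=
  contest_equilibrium_relation_general b ξl ξk x₁ y₁ N M hN hM hξl hξk hx₁ hy₁ hFOCx hFOCy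
end

section
/- In the two-coalition contest game with 0 < b < 1, the equilibrium normalized contribution satisfies x₁² = (1/N²)·(1/ξ̄_l)·b·(√(ξ̄_k·ξ̄_l))^b/((√ξ̄_l)^b + (√ξ̄_k)^b)², with the analogous formula y₁² = (1/M²)·(1/ξ̄_k)·b·(√(ξ̄_k·ξ̄_l))^b/((√ξ̄_l)^b + (√ξ̄_k)^b)² for the other coalition. -/
/-!
The relation `√ξ̄_k·M·y₁ = √ξ̄_l·N·x₁` says that the aggregate efforts `X = x₁Nξ̄_l` and
`Y = y₁Mξ̄_k` are both `λ := N·x₁·√ξ̄_l` times `(√ξ̄_l, √ξ̄_k)`. The marginal value of effort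
`b·Y^b·X^(b-1)/(X^b + Y^b)²` is homogeneous of degree `-1`, so the first-order condition becomes
`N²·ξ̄_l·x₁² = b·(√(ξ̄_k·ξ̄_l))^b/((√ξ̄_l)^b + (√ξ̄_k)^b)²`; squaring the relation gives
`M²·ξ̄_k·y₁² = N²·ξ̄_l·x₁²`.
-/

open Real

/-- The partial derivative in `X` of the contest success function `X^b / (X^b + Y^b)`. -/
noncomputable def tullockMarginal (b X Y : ℝ) : ℝ :=
  b * Y ^ b * X ^ (b - 1) / (X ^ b + Y ^ b) ^ 2

theorem tullockMarginal_mul_mul {b l X Y : ℝ} (hl : 0 < l) (hX : 0 ≤ X) (hY : 0 ≤ Y) :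
    tullockMarginal b (l * X) (l * Y) = tullockMarginal b X Y / l := by
  have hlb : 0 < l ^ b := rpow_pos_of_pos hl b
  simp only [tullockMarginal, mul_rpow hl.le hX, mul_rpow hl.le hY, rpow_sub_one hl.ne']
  field_simp

theorem tullockMarginal_eq {b X Y : ℝ} (hX : 0 < X) (hY : 0 ≤ Y) :
    tullockMarginal b X Y = b * (X * Y) ^ b / (X * (X ^ b + Y ^ b) ^ 2) := by
  rw [tullockMarginal, mul_rpow hX.le hY, rpow_sub_one hX.ne']
  field_simp

theorem contest_equilibrium_contributions_general
    (b ξl ξk x₁ y₁ : ℝ) (N M : ℕ)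
    (hN : 1 ≤ N) (hM : 1 ≤ M)
    (hξl : 0 < ξl) (hξk : 0 < ξk) (hx₁ : 0 < x₁)
    (hFOCx : (1 / (N : ℝ)) *
        (b * (y₁ * M * ξk) ^ b * (x₁ * N * ξl) ^ (b - 1)) /
        (((x₁ * N * ξl) ^ b + (y₁ * M * ξk) ^ b) ^ 2) = x₁)
    (hrel : Real.sqrt ξk * M * y₁ = Real.sqrt ξl * N * x₁) :
    x₁ ^ 2 = (1 / (N : ℝ) ^ 2) * (1 / ξl) *
        (b * (Real.sqrt (ξk * ξl)) ^ b) /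
        ((Real.sqrt ξl ^ b + Real.sqrt ξk ^ b) ^ 2) ∧
    y₁ ^ 2 = (1 / (M : ℝ) ^ 2) * (1 / ξk) *
        (b * (Real.sqrt (ξk * ξl)) ^ b) /
        ((Real.sqrt ξl ^ b + Real.sqrt ξk ^ b) ^ 2) := by
  set s := √ξl
  set t := √ξk
  have hs : 0 < s := sqrt_pos.mpr hξl
  have ht : 0 < t := sqrt_pos.mpr hξk
  have hsl : s ^ 2 = ξl := sq_sqrt hξl.le
  have htk : t ^ 2 = ξk := sq_sqrt hξk.le
  have hN0 : (0 : ℝ) < N := by exact_mod_cast hN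
  have hM0 : (0 : ℝ) < M := by exact_mod_cast hM
  have hl : 0 < N * x₁ * s := by positivity
  have hX : x₁ * N * ξl = N * x₁ * s * s := by rw [← hsl]; ring
  have hY : y₁ * M * ξk = N * x₁ * s * t := by rw [← htk]; linear_combination t * hrel
  rw [hX, hY, mul_div_assoc, ← tullockMarginal, tullockMarginal_mul_mul hl hs.le ht.le,
    tullockMarginal_eq hs ht.le] at hFOCx
  have hK : (N : ℝ) ^ 2 * ξl * x₁ ^ 2 = b * √(ξk * ξl) ^ b / (s ^ b + t ^ b) ^ 2 := by
    have hts : √(ξk * ξl) = s * t := by rw [sqrt_mul hξk.le, mul_comm]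
    rw [hts, ← hsl]
    field_simp at hFOCx ⊢
    linear_combination -hFOCx
  have hyx : (M : ℝ) ^ 2 * ξk * y₁ ^ 2 = N ^ 2 * ξl * x₁ ^ 2 := by
    rw [← htk, ← hsl]; linear_combination (t * M * y₁ + s * N * x₁) * hrel
  constructor
  · rw [mul_div_assoc, ← hK]; field_simp
  · rw [mul_div_assoc, ← hK, ← hyx]; field_simp

/-- Two-coalition contest: combining the FOC with the equilibrium relation
`√ξ̄_k·M·y₁ = √ξ̄_l·N·x₁` yields the closed forms for `x₁²` and `y₁²`. -/
theorem contest_equilibrium_contributions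
    (b ξl ξk x₁ y₁ : ℝ) (N M : ℕ)
    (hb0 : 0 < b) (hb1 : b < 1) (hN : 1 ≤ N) (hM : 1 ≤ M)
    (hξl : 0 < ξl) (hξk : 0 < ξk) (hx₁ : 0 < x₁) (hy₁ : 0 < y₁)
    (hFOCx : (1 / (N : ℝ)) *
        (b * (y₁ * M * ξk) ^ b * (x₁ * N * ξl) ^ (b - 1)) /
        (((x₁ * N * ξl) ^ b + (y₁ * M * ξk) ^ b) ^ 2) = x₁)
    (hrel : Real.sqrt ξk * M * y₁ = Real.sqrt ξl * N * x₁) :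
    x₁ ^ 2 = (1 / (N : ℝ) ^ 2) * (1 / ξl) *
        (b * (Real.sqrt (ξk * ξl)) ^ b) /
        ((Real.sqrt ξl ^ b + Real.sqrt ξk ^ b) ^ 2) ∧
    y₁ ^ 2 = (1 / (M : ℝ) ^ 2) * (1 / ξk) *
        (b * (Real.sqrt (ξk * ξl)) ^ b) /
        ((Real.sqrt ξl ^ b + Real.sqrt ξk ^ b) ^ 2) :=
  contest_equilibrium_contributions_general b ξl ξk x₁ y₁ N M hN hM hξl hξk hx₁ hFOCx hrel
end

section
/- In the two-coalition contest game with 0 < b < 1 and ξ̄_l ≥ ξ̄_k, the equilibrium utility U_j(ξ̄_l) = (ξ_j/N)·(1 − (√ξ̄_k)^b/((√ξ̄_l)^b + (√ξ̄_k)^b)) − (ξ_j²/(2N²ξ̄_l))·b·(√(ξ̄_k ξ̄_l))^b/((√ξ̄_l)^b + (√ξ̄_k)^b)² satisfies the single-crossing condition ∂²U_j/(∂ξ̄_l ∂ξ_j) > 0. -/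
/-!
With `A = (√ξ̄_k)^b` and `g(x) = (√x)^b = x^(b/2)`, the utility is
`ξ_j · w(x) / N - ξ_j² · c(x) / (2N²)` where `w = 1 - A / (g + A)` is increasing and
`c = b A g / ((g + A)² x)` is decreasing as long as `b < 2`. Hence the cross-partial
`w'(x) / N - ξ_j c'(x) / N²` is a sum of two positive terms.
-/

open Real

theorem hasDerivAt_sqrt_rpow (b : ℝ) {x : ℝ} (hx : 0 < x) :
    HasDerivAt (fun y => √y ^ b) (b / (2 * x) * √x ^ b) x := by
  have hpow : (fun y => √y ^ b) =ᶠ[nhds x] fun y => y ^ (b / 2) := by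
    filter_upwards [eventually_gt_nhds hx] with y hy
    rw [sqrt_eq_rpow, ← rpow_mul hy.le, one_div_mul_eq_div]
  refine ((hasDerivAt_rpow_const (Or.inl hx.ne')).congr_of_eventuallyEq hpow).congr_deriv ?_
  rw [sqrt_eq_rpow, ← rpow_mul hx.le, one_div_mul_eq_div, rpow_sub_one hx.ne']
  field_simp

theorem deriv_deriv_linear_sub_quadratic {p q : ℝ → ℝ} {p' q' x : ℝ}
    (hp : HasDerivAt p p' x) (hq : HasDerivAt q q' x) (s : ℝ) :
    deriv (fun t => deriv (fun y => t * p y - t ^ 2 * q y) x) s = p' - 2 * s * q' := by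
  have hinner : (fun t => deriv (fun y => t * p y - t ^ 2 * q y) x) =
      fun t => t * p' - t ^ 2 * q' :=
    funext fun t => ((hp.const_mul t).sub (hq.const_mul (t ^ 2))).deriv
  rw [hinner]
  exact (((hasDerivAt_id s).mul_const p').sub ((hasDerivAt_pow 2 s).mul_const q')).deriv.trans
    (by simp)

noncomputable def winShare (b ξk x : ℝ) : ℝ := 1 - √ξk ^ b / (√x ^ b + √ξk ^ b)

noncomputable def effortCost (b ξk x : ℝ) : ℝ :=
  b * (√ξk ^ b * √x ^ b) / (√x ^ b + √ξk ^ b) ^ 2 / x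

theorem sqrt_rpow_add_pos (b y : ℝ) {x : ℝ} (hx : 0 < x) : 0 < √x ^ b + √y ^ b := by
  have := rpow_pos_of_pos (sqrt_pos.2 hx) b
  positivity

theorem hasDerivAt_winShare (b ξk : ℝ) {x : ℝ} (hx : 0 < x) :
    HasDerivAt (winShare b ξk)
      (b * √ξk ^ b * √x ^ b / (2 * x * (√x ^ b + √ξk ^ b) ^ 2)) x := by
  have h : HasDerivAt (fun y => 1 - √ξk ^ b / (√y ^ b + √ξk ^ b)) _ x :=
    ((hasDerivAt_const x (√ξk ^ b)).div ((hasDerivAt_sqrt_rpow b hx).add_const (√ξk ^ b))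
      (sqrt_rpow_add_pos b ξk hx).ne').const_sub 1
  refine h.congr_deriv ?_
  field_simp
  ring

theorem hasDerivAt_effortCost (b ξk : ℝ) {x : ℝ} (hx : 0 < x) :
    HasDerivAt (effortCost b ξk)
      (-(b * √ξk ^ b * √x ^ b * ((2 - b) * √ξk ^ b + (2 + b) * √x ^ b) /
        (2 * x ^ 2 * (√x ^ b + √ξk ^ b) ^ 3))) x := by
  have hg := hasDerivAt_sqrt_rpow b hx
  have hden := sqrt_rpow_add_pos b ξk hx
  have h : HasDerivAt (fun y => b * (√ξk ^ b * √y ^ b) / (√y ^ b + √ξk ^ b) ^ 2 / y) _ x :=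
    (((hg.const_mul (√ξk ^ b)).const_mul b).div ((hg.add_const (√ξk ^ b)).pow 2)
      (pow_pos hden 2).ne').div (hasDerivAt_id x) hx.ne'
  refine h.congr_deriv ?_
  simp only [Pi.div_apply, Pi.pow_apply]
  field_simp
  ring

theorem utility_eq_winShare_sub_effortCost (b ξk ξj x : ℝ) (N : ℕ) (hξk : 0 ≤ ξk) :
    (ξj / N) * (1 - √ξk ^ b / (√x ^ b + √ξk ^ b))
        - (ξj ^ 2 / (2 * (N : ℝ) ^ 2 * x)) * (b * √(ξk * x) ^ b) / ((√x ^ b + √ξk ^ b) ^ 2)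
      = ξj * (winShare b ξk x / N) - ξj ^ 2 * (effortCost b ξk x / (2 * N ^ 2)) := by
  rw [sqrt_mul hξk, mul_rpow (sqrt_nonneg _) (sqrt_nonneg _), winShare, effortCost]
  ring

/-- Two-coalition contest, `0 < b < 1`, `ξ̄_l ≥ ξ̄_k`: the equilibrium utility
satisfies the single-crossing condition `∂²U_j/(∂ξ̄_l ∂ξ_j) > 0`. -/
theorem contest_single_crossing
    (b ξk ξlv ξjv : ℝ) (N : ℕ) (hN : 1 ≤ N)
    (hb0 : 0 < b) (hb1 : b < 1) (hξk : 0 < ξk) (hξl : ξk ≤ ξlv) (hξj : 0 < ξjv) :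
    0 < deriv (fun ξj : ℝ =>
          deriv (fun ξl : ℝ =>
              (ξj / N) * (1 - Real.sqrt ξk ^ b / (Real.sqrt ξl ^ b + Real.sqrt ξk ^ b))
                - (ξj ^ 2 / (2 * (N : ℝ) ^ 2 * ξl)) *
                    (b * Real.sqrt (ξk * ξl) ^ b) /
                    ((Real.sqrt ξl ^ b + Real.sqrt ξk ^ b) ^ 2)) ξlv) ξjv := by
  have hξl0 : 0 < ξlv := hξk.trans_le hξl
  have hN0 : (0 : ℝ) < N := by exact_mod_cast hN
  have hb2 : 0 < 2 - b := by linarith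
  have hA := rpow_pos_of_pos (sqrt_pos.2 hξk) b
  have hg := rpow_pos_of_pos (sqrt_pos.2 hξl0) b
  simp only [utility_eq_winShare_sub_effortCost b ξk _ _ N hξk.le]
  rw [deriv_deriv_linear_sub_quadratic ((hasDerivAt_winShare b ξk hξl0).div_const N)
    ((hasDerivAt_effortCost b ξk hξl0).div_const _), neg_div, mul_neg, sub_neg_eq_add]
  positivity
end
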